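/- (Boundness) Let V ∈ ℝ^{D×M} have columns v_1, …, v_M ∈ ℝ^D with ‖v_i‖₁ ≤ 1 for all i, let Δ^q V ∈ ℝ^{(D−q)×M} denote the matrix whose i-th column is Δ^q v_i, and define the q-th order similarity matrix Δ^q S := (Δ^q V)ᵀ (Δ^q V) ∈ ℝ^{M×M}. Then for every q with 2 ≤ q ≤ D−1, ‖Δ^q S − 0‖₁ ≤ (2^{q−2} · ‖Δ² V‖₁)², where 0 is the all-zero M×M matrix. -/

import Mathlib

/-!
Every entry of `(Δ^q V)ᵀ (Δ^q V)` is an inner product of two columns of `Δ^q V`, so it is bounded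
by the product of their `ℓ¹` norms; summing over all entries gives `‖Δ^q S‖₁ ≤ ‖Δ^q V‖₁²`.
Since `|a - b| ≤ |a| + |b|`, each further difference at most doubles the `ℓ¹` norm of a column,
whence `‖Δ^q V‖₁ ≤ 2^{q-2} ‖Δ² V‖₁`.
-/

open Matrix

/-- The `q`-th order forward difference of a vector `v ∈ ℝ^D`, defined recursively by
`Δ⁰v = v` and `(Δ^{q+1} v)(i) = (Δ^q v)(i+1) - (Δ^q v)(i)`. -/
def delta {D : ℕ} (v : Fin D → ℝ) : (q : ℕ) → Fin (D - q) → ℝ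
  | 0, i => v i
  | q + 1, i =>
      delta v q ⟨i.val + 1, by have := i.isLt; omega⟩ -
      delta v q ⟨i.val, by have := i.isLt; omega⟩

/-- L1 norm of a vector: the sum of the absolute values of its entries. -/
def l1 {n : ℕ} (v : Fin n → ℝ) : ℝ := ∑ i, |v i|

/-- Entrywise L1 norm of a matrix. -/
def matL1 {n m : ℕ} (A : Matrix (Fin n) (Fin m) ℝ) : ℝ := ∑ i, ∑ j, |A i j|

/-- Columnwise `q`-th order forward difference of a matrix `V ∈ ℝ^{D×M}`. -/
def deltaMat {D M : ℕ} (V : Matrix (Fin D) (Fin M) ℝ) (q : ℕ) :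
    Matrix (Fin (D - q)) (Fin M) ℝ :=
  Matrix.of fun i j => delta (fun d => V d j) q i

/-- The Toeplitz matrix `A_q ∈ ℝ^{(D−q)×D}` representing the `q`-th order forward
difference: `A_q(i,j) = (−1)^{q−(j−i)} C(q, j−i)` when `0 ≤ j−i ≤ q`, else `0`. -/
def Aq (D q : ℕ) : Matrix (Fin (D - q)) (Fin D) ℝ :=
  Matrix.of fun i j =>
    if i.val ≤ j.val ∧ j.val ≤ i.val + q then
      (-1 : ℝ) ^ (q - (j.val - i.val)) * (q.choose (j.val - i.val))
    else 0

lemma l1_nonneg {n : ℕ} (v : Fin n → ℝ) : 0 ≤ l1 v :=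
  Finset.sum_nonneg fun _ _ => abs_nonneg _

lemma l1_comp_le {n m : ℕ} (w : Fin m → ℝ) {f : Fin n → Fin m} (hf : Function.Injective f) :
    l1 (w ∘ f) ≤ l1 w :=
  (Finset.sum_map Finset.univ ⟨f, hf⟩ fun j => |w j|).symm.trans_le
    (Finset.sum_le_univ_sum_of_nonneg fun _ => abs_nonneg _)

lemma l1_delta_succ_le {D : ℕ} (v : Fin D → ℝ) (q : ℕ) :
    l1 (delta v (q + 1)) ≤ 2 * l1 (delta v q) := by
  let next : Fin (D - (q + 1)) → Fin (D - q) := fun i => ⟨i + 1, by omega⟩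
  let same : Fin (D - (q + 1)) → Fin (D - q) := fun i => ⟨i, by omega⟩
  have h_next : Function.Injective next := fun a b h => by simpa [next, Fin.ext_iff] using h
  have h_same : Function.Injective same := fun a b h => by simpa [same, Fin.ext_iff] using h
  calc l1 (delta v (q + 1))
      ≤ l1 (delta v q ∘ next) + l1 (delta v q ∘ same) := by
        rw [l1, l1, l1, ← Finset.sum_add_distrib]
        exact Finset.sum_le_sum fun i _ => abs_sub _ _
    _ ≤ 2 * l1 (delta v q) := by
        linarith [l1_comp_le (delta v q) h_next, l1_comp_le (delta v q) h_same]

lemma l1_delta_le_pow_mul {D : ℕ} (v : Fin D → ℝ) {p q : ℕ} (hpq : p ≤ q) :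
    l1 (delta v q) ≤ 2 ^ (q - p) * l1 (delta v p) := by
  induction q, hpq using Nat.le_induction with
  | base => simp
  | succ q hpq ih =>
    calc l1 (delta v (q + 1)) ≤ 2 * l1 (delta v q) := l1_delta_succ_le v q
      _ ≤ 2 * (2 ^ (q - p) * l1 (delta v p)) := by linarith
      _ = 2 ^ (q + 1 - p) * l1 (delta v p) := by
        rw [Nat.sub_add_comm hpq, pow_succ]; ring

lemma abs_dotProduct_le_l1_mul_l1 {n : ℕ} (u w : Fin n → ℝ) : |u ⬝ᵥ w| ≤ l1 u * l1 w := by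
  calc |u ⬝ᵥ w| ≤ ∑ k, |u k| * |w k| := by
        simpa only [dotProduct, abs_mul] using Finset.abs_sum_le_sum_abs (fun k => u k * w k) Finset.univ
    _ ≤ ∑ k, |u k| * l1 w := Finset.sum_le_sum fun k _ =>
        mul_le_mul_of_nonneg_left
          (Finset.single_le_sum (f := fun k => |w k|) (fun _ _ => abs_nonneg _)
            (Finset.mem_univ k))
          (abs_nonneg _)
    _ = l1 u * l1 w := (Finset.sum_mul ..).symm

lemma sum_l1_col_eq_matL1 {n m : ℕ} (A : Matrix (Fin n) (Fin m) ℝ) :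
    ∑ j, l1 (fun i => A i j) = matL1 A :=
  Finset.sum_comm

lemma matL1_transpose_mul_le {n m k : ℕ} (A : Matrix (Fin n) (Fin m) ℝ)
    (B : Matrix (Fin n) (Fin k) ℝ) : matL1 (Aᵀ * B) ≤ matL1 A * matL1 B := by
  rw [← sum_l1_col_eq_matL1 A, ← sum_l1_col_eq_matL1 B, Finset.sum_mul_sum]
  exact Finset.sum_le_sum fun i _ => Finset.sum_le_sum fun j _ =>
    abs_dotProduct_le_l1_mul_l1 (fun k => A k i) (fun k => B k j)

lemma matL1_deltaMat_le_pow_mul {D M : ℕ} (V : Matrix (Fin D) (Fin M) ℝ) {p q : ℕ}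
    (hpq : p ≤ q) : matL1 (deltaMat V q) ≤ 2 ^ (q - p) * matL1 (deltaMat V p) := by
  rw [← sum_l1_col_eq_matL1, ← sum_l1_col_eq_matL1, Finset.mul_sum]
  exact Finset.sum_le_sum fun j _ => l1_delta_le_pow_mul (fun d => V d j) hpq

theorem boundness_general (D M q : ℕ) (hq2 : 2 ≤ q)
    (V : Matrix (Fin D) (Fin M) ℝ) :
    matL1 ((deltaMat V q)ᵀ * deltaMat V q - 0) ≤
      (2 ^ (q - 2) * matL1 (deltaMat V 2)) ^ 2 := by
  have h_nonneg : 0 ≤ matL1 (deltaMat V q) := by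
    rw [← sum_l1_col_eq_matL1]
    exact Finset.sum_nonneg fun _ _ => l1_nonneg _
  calc matL1 ((deltaMat V q)ᵀ * deltaMat V q - 0)
      ≤ matL1 (deltaMat V q) ^ 2 := by
        rw [sub_zero, sq]
        exact matL1_transpose_mul_le _ _
    _ ≤ (2 ^ (q - 2) * matL1 (deltaMat V 2)) ^ 2 :=
        pow_le_pow_left₀ h_nonneg (matL1_deltaMat_le_pow_mul V hq2) 2

/-- Boundness: for L1-bounded columns and 2 ≤ q ≤ D−1,
‖Δ^q S − 0‖₁ ≤ (2^{q−2} ‖Δ² V‖₁)² where Δ^q S = (Δ^q V)ᵀ (Δ^q V). -/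
theorem boundness (D M q : ℕ) (hq2 : 2 ≤ q) (hq : q ≤ D - 1)
    (V : Matrix (Fin D) (Fin M) ℝ) (hV : ∀ j : Fin M, l1 (fun d => V d j) ≤ 1) :
    matL1 ((deltaMat V q)ᵀ * deltaMat V q - 0) ≤
      (2 ^ (q - 2) * matL1 (deltaMat V 2)) ^ 2 :=
  boundness_general D M q hq2 V
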